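/- arXiv:2305.13209 — 6 statements merged into one kernel-verified Lean document; each statement's English description precedes it below -/
import Mathlib

section
/- Let β₀ > 0 and let (a_t)_{t∈ℕ} be a sequence of nonnegative reals satisfying a_{t+1} ≤ β₀ + (1/2) a_t^{3/2} for all t, with a₀ ≤ 16/9. Then there exist a universal constant c > 0 and an index T with T ≤ c · max{1, log(log(1/β₀))} such that a_T ≤ 6β₀. -/
/-!
Whenever `a (t + 1) > 6 β₀`, the recursion forces `β₀ < a t ^ (3/2) / 10`, hence
`a (t + 1) ≤ (3/5) a t ^ (3/2)`. For `b = (9/25) a` this reads `b (t + 1) ≤ b t ^ (3/2)`, and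
`b 0 ≤ 16/25 < 1`, so as long as the sequence stays above `6 β₀` it is bounded by
`(25/9) (16/25) ^ ((3/2) ^ t)`, which drops below `(25/9) β₀` after `O(log log (1/β₀))` steps.
-/

open Real

lemma le_rpow_pow_of_le_rpow {b : ℕ → ℝ} {p : ℝ} (hp : 0 ≤ p) (hb : ∀ t, 0 ≤ b t) {K : ℕ}
    (hstep : ∀ t < K, b (t + 1) ≤ b t ^ p) : b K ≤ b 0 ^ (p ^ K) := by
  induction K with
  | zero => simp
  | succ K ih =>
    calc b (K + 1) ≤ b K ^ p := hstep K K.lt_succ_self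
      _ ≤ (b 0 ^ (p ^ K)) ^ p :=
          rpow_le_rpow (hb K) (ih fun t ht => hstep t (ht.trans K.lt_succ_self)) hp
      _ = b 0 ^ (p ^ (K + 1)) := by rw [← rpow_mul (hb 0), pow_succ]

lemma scaled_le_rpow_of_six_mul_lt {β x y : ℝ} (hx : 0 ≤ x)
    (hy : y ≤ β + 1 / 2 * x ^ ((3 : ℝ) / 2)) (hβy : 6 * β < y) :
    9 / 25 * y ≤ (9 / 25 * x) ^ ((3 : ℝ) / 2) := by
  have hscale : (9 / 25 : ℝ) ^ ((3 : ℝ) / 2) = 27 / 125 := by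
    rw [show (9 / 25 : ℝ) = (3 / 5) ^ (2 : ℝ) by norm_num, ← rpow_mul (by norm_num)]
    norm_num
  rw [mul_rpow (by norm_num) hx, hscale]
  linarith

lemma exp_div_three_le_three_halves_pow (n : ℕ) : exp (n / 3) ≤ (3 / 2 : ℝ) ^ n := by
  have hlog : (1 / 3 : ℝ) ≤ log (3 / 2) := by
    have := one_sub_inv_le_log_of_pos (show (0 : ℝ) < 3 / 2 by norm_num)
    norm_num at this ⊢
    linarith
  calc exp (n / 3) ≤ exp (n * log (3 / 2)) :=
        exp_le_exp.2 (by nlinarith [n.cast_nonneg (α := ℝ)])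
    _ = (3 / 2 : ℝ) ^ n := by rw [exp_nat_mul, exp_log (by norm_num)]

lemma exists_rpow_three_halves_pow_le {β : ℝ} (hβ : 0 < β) :
    ∃ K : ℕ, (K : ℝ) ≤ 10 * max 1 (log (log (1 / β))) ∧
      (16 / 25 : ℝ) ^ ((3 / 2 : ℝ) ^ K) ≤ β := by
  set M := max 1 (log (log (1 / β)))
  have hM : 1 ≤ M := le_max_left _ _
  refine ⟨⌈9 * M⌉₊, by linarith [Nat.ceil_lt_add_one (show 0 ≤ 9 * M by linarith)], ?_⟩
  set K := ⌈9 * M⌉₊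
  -- Also valid when `log (1 / β) ≤ 0`, where `log (log (1 / β))` is a junk value.
  have hu : log (1 / β) ≤ exp M :=
    (le_exp_log _).trans (exp_le_exp.2 (le_max_right _ _))
  have hK : 9 * M ≤ K := Nat.le_ceil _
  have hexp : 25 / 9 * exp M ≤ exp (K / 3) := by
    calc 25 / 9 * exp M ≤ exp 2 * exp M := by
          gcongr; linarith [add_one_le_exp 2]
      _ = exp (2 + M) := (exp_add _ _).symm
      _ ≤ exp (K / 3) := exp_le_exp.2 (by linarith)
  have hlog : log (16 / 25 : ℝ) ≤ -(9 / 25) := by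
    linarith [log_le_sub_one_of_pos (show (0 : ℝ) < 16 / 25 by norm_num)]
  rw [rpow_def_of_pos (by norm_num), ← exp_log hβ, exp_le_exp]
  rw [one_div, log_inv] at hu
  calc log (16 / 25) * (3 / 2 : ℝ) ^ K ≤ -(9 / 25) * (3 / 2 : ℝ) ^ K :=
        mul_le_mul_of_nonneg_right hlog (by positivity)
    _ ≤ -(9 / 25) * exp (K / 3) := by linarith [exp_div_three_le_three_halves_pow K]
    _ ≤ log β := by linarith

lemma exists_le_six_mul_of_rpow_three_halves_pow_le {β : ℝ} {a : ℕ → ℝ} (ha : ∀ t, 0 ≤ a t)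
    (hrec : ∀ t, a (t + 1) ≤ β + 1 / 2 * a t ^ ((3 : ℝ) / 2)) (h0 : a 0 ≤ 16 / 9) {K : ℕ}
    (hK : (16 / 25 : ℝ) ^ ((3 / 2 : ℝ) ^ K) ≤ β) : ∃ T ≤ K, a T ≤ 6 * β := by
  by_contra! hlarge
  have hb : ∀ t, 0 ≤ 9 / 25 * a t := fun t => by linarith [ha t]
  have hdecay : 9 / 25 * a K ≤ (9 / 25 * a 0) ^ ((3 / 2 : ℝ) ^ K) :=
    le_rpow_pow_of_le_rpow (by norm_num) hb fun t ht =>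
      scaled_le_rpow_of_six_mul_lt (ha t) (hrec t) (hlarge (t + 1) ht)
  have hstart : (9 / 25 * a 0) ^ ((3 / 2 : ℝ) ^ K) ≤ (16 / 25 : ℝ) ^ ((3 / 2 : ℝ) ^ K) :=
    rpow_le_rpow (hb 0) (by linarith) (by positivity)
  have hβ : 0 < β := (rpow_pos_of_pos (by norm_num) _).trans_le hK
  linarith [hlarge K le_rfl]

/-- Let `β₀ > 0` and let `(a_t)` be a sequence of nonnegative reals with
`a_{t+1} ≤ β₀ + (1/2) a_t^{3/2}` for all `t` and `a₀ ≤ 16/9`. Then there is a universal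
constant `c > 0` and an index `T ≤ c · max{1, log log(1/β₀)}` with `a_T ≤ 6 β₀`. -/
theorem seq_reaches_order_beta :
    ∃ c : ℝ, 0 < c ∧
      ∀ β₀ : ℝ, 0 < β₀ →
        ∀ a : ℕ → ℝ, (∀ t, 0 ≤ a t) →
          (∀ t, a (t + 1) ≤ β₀ + (1 / 2) * a t ^ ((3 : ℝ) / 2)) →
          a 0 ≤ 16 / 9 →
          ∃ T : ℕ, (T : ℝ) ≤ c * max 1 (Real.log (Real.log (1 / β₀))) ∧ a T ≤ 6 * β₀ := by
  refine ⟨10, by norm_num, fun β₀ hβ₀ a ha hrec h0 => ?_⟩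
  obtain ⟨K, hK, hpow⟩ := exists_rpow_three_halves_pow_le hβ₀
  obtain ⟨T, hTK, hT⟩ := exists_le_six_mul_of_rpow_three_halves_pow_le ha hrec h0 hpow
  exact ⟨T, le_trans (by exact_mod_cast hTK) hK, hT⟩
end

section
/- Let (ã_t)_{t∈ℕ} be a sequence of real numbers with ã₀ ≥ 1 such that, for every t, if ã_t ≥ 1 then ã_{t+1} ≤ ã_t − (1/3) ã_t^{3/4}. Then for every t ∈ ℕ such that ã_s ≥ 1 for all s ≤ t, one has ã_t ≤ ((ã₀)^{1/4} − t/12)⁴. -/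
/-! Writing `d = ã_t^{1/4}`, the recursion reads `ã_{t+1} ≤ d⁴ - d³/3`, and
`d⁴ - d³/3 ≤ (d - 1/12)⁴` because the difference `d²/24 - d/432 + 1/12⁴` has negative
discriminant. So the fourth root of `ã_t` drops by at least `1/12` per step. -/

namespace Real

lemma rpow_one_div_four_pow_four {x : ℝ} (hx : 0 ≤ x) : (x ^ ((1 : ℝ) / 4)) ^ 4 = x := by
  rw [← rpow_natCast, ← rpow_mul hx]
  norm_num

lemma rpow_three_div_four_eq_pow_three {x : ℝ} (hx : 0 ≤ x) :
    x ^ ((3 : ℝ) / 4) = (x ^ ((1 : ℝ) / 4)) ^ 3 := by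
  rw [← rpow_natCast, ← rpow_mul hx]
  norm_num

end Real

lemma pow_four_sub_pow_three_div_three_le (d : ℝ) : d ^ 4 - 1 / 3 * d ^ 3 ≤ (d - 1 / 12) ^ 4 := by
  nlinarith [sq_nonneg (d - 1 / 36)]

lemma rpow_one_div_four_le_sub_of_le_sub_rpow_three_div_four {x y : ℝ} (hx : 0 < x) (hy : 0 ≤ y)
    (h : y ≤ x - 1 / 3 * x ^ ((3 : ℝ) / 4)) :
    y ^ ((1 : ℝ) / 4) ≤ x ^ ((1 : ℝ) / 4) - 1 / 12 := by
  set d := x ^ ((1 : ℝ) / 4) with hd_def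
  have hd : 0 < d := Real.rpow_pos_of_pos hx _
  have h' : y ≤ d ^ 4 - 1 / 3 * d ^ 3 := by
    rwa [hd_def, Real.rpow_one_div_four_pow_four hx.le, ← Real.rpow_three_div_four_eq_pow_three hx.le]
  -- `0 ≤ y ≤ d³ (d - 1/3)` with `d > 0`
  have hd_ge : 1 / 3 ≤ d := by nlinarith [pow_pos hd 3]
  rw [← pow_le_pow_iff_left₀ (Real.rpow_nonneg hy _) (by linarith) four_ne_zero,
    Real.rpow_one_div_four_pow_four hy]
  exact h'.trans (pow_four_sub_pow_three_div_three_le d)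

theorem seq_quartic_decrease_general (a : ℕ → ℝ)
    (hrec : ∀ t, 1 ≤ a t → a (t + 1) ≤ a t - (1 / 3) * a t ^ ((3 : ℝ) / 4)) :
    ∀ t : ℕ, (∀ s ≤ t, 1 ≤ a s) →
      a t ≤ (a 0 ^ ((1 : ℝ) / 4) - (t : ℝ) / 12) ^ 4 := by
  intro t ht
  have hroot : a t ^ ((1 : ℝ) / 4) ≤ a 0 ^ ((1 : ℝ) / 4) - (t : ℝ) / 12 := by
    induction t with
    | zero => simp
    | succ t ih =>
      have hstep := rpow_one_div_four_le_sub_of_le_sub_rpow_three_div_four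
        (zero_lt_one.trans_le (ht t t.le_succ)) (zero_le_one.trans (ht (t + 1) le_rfl))
        (hrec t (ht t t.le_succ))
      have hprev := ih fun s hs => ht s (hs.trans t.le_succ)
      push_cast
      linarith
  have hat : 0 ≤ a t := zero_le_one.trans (ht t le_rfl)
  calc a t = (a t ^ ((1 : ℝ) / 4)) ^ 4 := (Real.rpow_one_div_four_pow_four hat).symm
    _ ≤ _ := pow_le_pow_left₀ (Real.rpow_nonneg hat _) hroot 4

/-- Let `(ã_t)` be a real sequence with `ã₀ ≥ 1` such that whenever `ã_t ≥ 1` we have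
`ã_{t+1} ≤ ã_t − (1/3) ã_t^{3/4}`. Then for every `t` such that `ã_s ≥ 1` for all `s ≤ t`,
we have `ã_t ≤ (ã₀^{1/4} − t/12)⁴`. -/
theorem seq_quartic_decrease (a : ℕ → ℝ) (h0 : 1 ≤ a 0)
    (hrec : ∀ t, 1 ≤ a t → a (t + 1) ≤ a t - (1 / 3) * a t ^ ((3 : ℝ) / 4)) :
    ∀ t : ℕ, (∀ s ≤ t, 1 ≤ a s) →
      a t ≤ (a 0 ^ ((1 : ℝ) / 4) - (t : ℝ) / 12) ^ 4 :=
  seq_quartic_decrease_general a hrec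
end

section
/- For every α ∈ ℝ with α ≠ 0 and every β ∈ ℝ, one has log(1 + exp(β)) ≤ log(1 + exp(α)) + (β − α)/(1 + exp(−α)) + ((exp(α) − 1)/(4α(exp(α) + 1))) · (β − α)². -/
/-!
Since `log (1 + exp x) = x / 2 + log 2 + log (cosh (x / 2))` and the linear part is exact, it
suffices to bound `log (cosh (b / 2))`. As a function of `b²` this is concave on `[0, ∞)`: its
derivative `tanh (b / 2) / (4 b)` decreases in `b > 0`, because `tanh t / t` does. The claimed
inequality is the tangent line bound at `a²`, rewritten with
`tanh (a / 2) = (exp a - 1) / (exp a + 1)`.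
-/

open Real Set

theorem le_add_mul_sq_sub_sq_of_antitoneOn_deriv_div {g g' : ℝ → ℝ}
    (hg : ∀ x, 0 ≤ x → HasDerivAt g (g' x) x) (hanti : AntitoneOn (fun x => g' x / x) (Ioi 0))
    {a b : ℝ} (ha : 0 < a) (hb : 0 ≤ b) :
    g b ≤ g a + g' a / (2 * a) * (b ^ 2 - a ^ 2) := by
  set F : ℝ → ℝ := fun y => g' a / (2 * a) * y ^ 2 - g y with hFdef
  have hF : ∀ y, 0 < y → HasDerivAt F (y * (g' a / a - g' y / y)) y := by
    intro y hy
    refine (((hasDerivAt_pow 2 y).const_mul (g' a / (2 * a))).sub (hg y hy.le)).congr_deriv ?_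
    field_simp
    ring
  have hFcont : ContinuousOn F (Ici 0) := fun y hy =>
    ((continuous_const.mul (continuous_pow 2)).continuousAt.sub
      (hg y hy).continuousAt).continuousWithinAt
  suffices F a ≤ F b by simp only [hFdef] at this; linarith
  rcases le_total a b with hab | hba
  · refine monotoneOn_of_hasDerivWithinAt_nonneg (convex_Ici a)
      (f' := fun y => y * (g' a / a - g' y / y))
      (hFcont.mono (Ici_subset_Ici.2 ha.le)) (fun y hy => ?_) (fun y hy => ?_)
      self_mem_Ici hab hab
    · rw [interior_Ici] at hy
      exact (hF y (ha.trans hy)).hasDerivWithinAt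
    · rw [interior_Ici] at hy
      have hy0 : 0 < y := ha.trans hy
      exact mul_nonneg hy0.le (sub_nonneg.2 (hanti ha hy0 hy.le))
  · refine antitoneOn_of_hasDerivWithinAt_nonpos (convex_Icc 0 a)
      (f' := fun y => y * (g' a / a - g' y / y))
      (hFcont.mono Icc_subset_Ici_self) (fun y hy => ?_) (fun y hy => ?_)
      ⟨hb, hba⟩ (right_mem_Icc.2 ha.le) hba
    · rw [interior_Icc] at hy
      exact (hF y hy.1).hasDerivWithinAt
    · rw [interior_Icc] at hy
      exact mul_nonpos_of_nonneg_of_nonpos hy.1.le (sub_nonpos.2 (hanti hy.1 ha hy.2.le))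

theorem Real.hasDerivAt_tanh (x : ℝ) : HasDerivAt tanh (cosh x ^ 2)⁻¹ x := by
  have h := (hasDerivAt_sinh x).div (hasDerivAt_cosh x) (cosh_pos x).ne'
  rw [show sinh / cosh = tanh from funext fun y => (tanh_eq_sinh_div_cosh y).symm] at h
  refine h.congr_deriv ?_
  field_simp
  linarith [cosh_sq x]

theorem Real.antitoneOn_tanh_div_self : AntitoneOn (fun x => tanh x / x) (Ioi 0) := by
  refine antitoneOn_of_hasDerivWithinAt_nonpos (convex_Ioi 0) ?_ (fun x hx => ?_) (fun x hx => ?_)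
    (f' := fun x => ((cosh x ^ 2)⁻¹ * x - tanh x * 1) / x ^ 2)
  · exact fun x hx => ((hasDerivAt_tanh x).continuousAt.div continuousAt_id
      (ne_of_gt hx)).continuousWithinAt
  · rw [interior_Ioi] at hx
    exact ((hasDerivAt_tanh x).div (hasDerivAt_id x) hx.ne').hasDerivWithinAt
  · rw [interior_Ioi, mem_Ioi] at hx
    have hsinh : 2 * x ≤ sinh (2 * x) := self_le_sinh_iff.2 (by positivity)
    rw [sinh_two_mul] at hsinh
    refine div_nonpos_of_nonpos_of_nonneg ?_ (sq_nonneg x)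
    rw [tanh_eq_sinh_div_cosh, sub_nonpos, mul_one, inv_mul_eq_div,
      div_le_div_iff₀ (by positivity) (cosh_pos x)]
    nlinarith [cosh_pos x]

theorem Real.hasDerivAt_log_cosh_half (x : ℝ) :
    HasDerivAt (fun y => log (cosh (y / 2))) (tanh (x / 2) / 2) x := by
  have h := ((hasDerivAt_cosh (x / 2)).comp x ((hasDerivAt_id x).div_const 2)).log
    (cosh_pos (x / 2)).ne'
  refine h.congr_deriv ?_
  rw [tanh_eq_sinh_div_cosh, Function.comp_apply, id]
  ring

theorem Real.log_cosh_half_le (a b : ℝ) (ha : a ≠ 0) :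
    log (cosh (b / 2)) ≤ log (cosh (a / 2)) + tanh (a / 2) / (4 * a) * (b ^ 2 - a ^ 2) := by
  have hanti : AntitoneOn (fun x => tanh (x / 2) / 2 / x) (Ioi 0) := by
    intro x hx y hy hxy
    have h := antitoneOn_tanh_div_self (mem_Ioi.2 (half_pos hx)) (mem_Ioi.2 (half_pos hy))
      (by linarith)
    have e : ∀ z : ℝ, tanh (z / 2) / 2 / z = tanh (z / 2) / (z / 2) / 4 := fun z => by ring
    simp only [e]
    exact div_le_div_of_nonneg_right h (by norm_num)
  have key := le_add_mul_sq_sub_sq_of_antitoneOn_deriv_div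
    (fun x _ => hasDerivAt_log_cosh_half x) hanti (abs_pos.2 ha) (abs_nonneg b)
  have hcosh : ∀ x : ℝ, cosh (|x| / 2) = cosh (x / 2) := fun x => by
    rw [← cosh_abs (x / 2), abs_div, abs_two]
  have hcoeff : tanh (|a| / 2) / 2 / (2 * |a|) = tanh (a / 2) / (4 * a) := by
    rcases abs_cases a with ⟨h, _⟩ | ⟨h, _⟩ <;> rw [h]
    · ring
    · rw [neg_div, tanh_neg]
      ring
  rwa [hcosh, hcosh, sq_abs, sq_abs, hcoeff] at key

theorem Real.log_one_add_exp (x : ℝ) :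
    log (1 + exp x) = x / 2 + log 2 + log (cosh (x / 2)) := by
  have h : 1 + exp x = exp (x / 2) * (2 * cosh (x / 2)) := by
    rw [cosh_eq, mul_div_cancel₀ _ two_ne_zero, mul_add, ← exp_add, ← exp_add]
    ring_nf
    rw [exp_zero, add_comm]
  rw [h, log_mul (exp_ne_zero _) (by positivity), log_exp, log_mul two_ne_zero (cosh_pos _).ne']
  ring

theorem Real.tanh_half (x : ℝ) : tanh (x / 2) = (exp x - 1) / (exp x + 1) := by
  have hx : exp x = exp (x / 2) ^ 2 := by rw [← exp_nat_mul]; ring_nf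
  rw [tanh_eq, exp_neg, hx]
  have hpos := exp_pos (x / 2)
  field_simp

/-- For every `α ≠ 0` and every `β`,
`log(1 + e^β) ≤ log(1 + e^α) + (β − α)/(1 + e^{−α}) + ((e^α − 1)/(4α(e^α + 1)))(β − α)²`. -/
theorem log_one_add_exp_quadratic_ub (α β : ℝ) (hα : α ≠ 0) :
    Real.log (1 + Real.exp β) ≤
      Real.log (1 + Real.exp α) + (β - α) / (1 + Real.exp (-α))
        + (Real.exp α - 1) / (4 * α * (Real.exp α + 1)) * (β - α) ^ 2 := by
  have key := log_cosh_half_le α β hα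
  set t := tanh (α / 2) with ht
  have hquad : (exp α - 1) / (4 * α * (exp α + 1)) = t / (4 * α) := by
    rw [ht, tanh_half]
    field_simp
  have hlin : (β - α) / (1 + exp (-α)) = (β - α) * (1 + t) / 2 := by
    rw [ht, tanh_half, exp_neg]
    field_simp
    ring
  have hsq : t / (4 * α) * (β ^ 2 - α ^ 2) = t / (4 * α) * (β - α) ^ 2 + (β - α) * t / 2 := by
    field_simp
    ring
  rw [log_one_add_exp β, log_one_add_exp α, hquad, hlin]
  linarith
end

section
/- For every 0 < μ < 1 and every λ ∈ ℝ with λ ≠ 0, one has (2/λ²)·(log(μ·exp(λ) + 1 − μ) − μλ) ≤ (1/2 − μ)/log(1/μ − 1), where for μ = 1/2 the right-hand side is interpreted as its limiting value 1/4. -/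
/-!
Put `s = artanh (1 - 2μ) = ½ log (1/μ - 1)`, so that `tanh s = 1 - 2μ` and
`μ e^λ + 1 - μ = e^{λ/2} cosh (λ/2 - s) / cosh s`. Writing `κ = dslope tanh 0 s` (that is
`tanh s / s`, or `1` at `s = 0`), the derivative `t (tanh t / t - κ)` of `log cosh t - κ t² / 2`
changes sign at `t = s` only, because `tanh t / t` decreases on `t > 0`. Hence
`log cosh t ≤ log cosh s + κ (t² - s²) / 2`; at `t = λ/2 - s` the linear terms in `λ` cancel
and what is left is `log (μ e^λ + 1 - μ) - μλ ≤ κ λ² / 8`. Both branches of the right-hand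
side are `κ / 4`.
-/

open Real Set

theorem le_of_hasDerivAt_nonneg_of_nonpos {f f' : ℝ → ℝ} {a b x : ℝ}
    (hf : ∀ t, HasDerivAt f (f' t) t) (hinc : ∀ t ∈ Ioo a b, 0 ≤ f' t)
    (hdec : ∀ t ∈ Ioi b, f' t ≤ 0) (hx : a ≤ x) : f x ≤ f b := by
  have hcont : Continuous f := continuous_iff_continuousAt.2 fun t ↦ (hf t).continuousAt
  rcases le_total x b with hxb | hbx
  · refine monotoneOn_of_hasDerivWithinAt_nonneg (convex_Icc a b) hcont.continuousOn
      (fun t _ ↦ (hf t).hasDerivWithinAt) (fun t ht ↦ hinc t ?_) ⟨hx, hxb⟩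
      ⟨hx.trans hxb, le_rfl⟩ hxb
    rwa [interior_Icc] at ht
  · refine antitoneOn_of_hasDerivWithinAt_nonpos (convex_Ici b) hcont.continuousOn
      (fun t _ ↦ (hf t).hasDerivWithinAt) (fun t ht ↦ hdec t ?_) self_mem_Ici hbx hbx
    rwa [interior_Ici] at ht

namespace Real

theorem hasDerivAt_tanh_s6 (x : ℝ) : HasDerivAt tanh (1 / cosh x ^ 2) x := by
  have h := (hasDerivAt_sinh x).div (hasDerivAt_cosh x) (cosh_pos x).ne'
  rw [← sq, ← sq, cosh_sq_sub_sinh_sq] at h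
  exact h.congr_of_eventuallyEq (.of_forall tanh_eq_sinh_div_cosh)

theorem continuous_tanh : Continuous tanh :=
  continuous_iff_continuousAt.2 fun x ↦ (hasDerivAt_tanh_s6 x).continuousAt

theorem hasDerivAt_log_cosh (x : ℝ) : HasDerivAt (fun y ↦ log (cosh y)) (tanh x) x := by
  simpa only [tanh_eq_sinh_div_cosh] using (hasDerivAt_cosh x).log (cosh_pos x).ne'

theorem tanh_le_self {x : ℝ} (hx : 0 ≤ x) : tanh x ≤ x := by
  have hmono : MonotoneOn (fun t ↦ t - tanh t) (Ici 0) := by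
    refine monotoneOn_of_hasDerivWithinAt_nonneg (convex_Ici 0)
      (continuous_id.sub continuous_tanh).continuousOn
      (fun t _ ↦ ((hasDerivAt_id t).sub (hasDerivAt_tanh_s6 t)).hasDerivWithinAt) fun t _ ↦ ?_
    rw [sub_nonneg, div_le_one (by positivity)]
    nlinarith [one_le_cosh t]
  simpa using hmono self_mem_Ici hx hx

theorem antitoneOn_tanh_div_self_s6 : AntitoneOn (fun t ↦ tanh t / t) (Ioi 0) := by
  refine antitoneOn_of_hasDerivWithinAt_nonpos (convex_Ioi 0)
    (continuous_tanh.continuousOn.div continuousOn_id fun t ht ↦ ne_of_gt ht)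
    (fun t ht ↦ ((hasDerivAt_tanh_s6 t).div (hasDerivAt_id t)
      (ne_of_gt (interior_subset ht))).hasDerivWithinAt) fun t ht ↦ ?_
  rw [interior_Ioi] at ht
  have ht : 0 < t := ht
  have hsinh : t ≤ sinh t * cosh t := by
    nlinarith [self_le_sinh_iff.2 ht.le, one_le_cosh t, sinh_nonneg_iff.2 ht.le]
  refine div_nonpos_of_nonpos_of_nonneg ?_ (sq_nonneg _)
  rw [tanh_eq_sinh_div_cosh, id, mul_one, sub_nonpos, div_mul_eq_mul_div,
    div_le_div_iff₀ (by positivity) (cosh_pos t)]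
  nlinarith [cosh_pos t]

theorem dslope_tanh_zero_zero : dslope tanh 0 0 = 1 := by
  simp [dslope_same, (hasDerivAt_tanh_s6 0).deriv]

theorem dslope_tanh_zero_of_ne {x : ℝ} (hx : x ≠ 0) : dslope tanh 0 x = tanh x / x := by
  simp [dslope_of_ne _ hx, slope_def_field]

theorem mul_dslope_tanh_zero (x : ℝ) : x * dslope tanh 0 x = tanh x := by
  simpa using sub_smul_dslope tanh 0 x

theorem dslope_tanh_zero_neg (x : ℝ) : dslope tanh 0 (-x) = dslope tanh 0 x := by
  rcases eq_or_ne x 0 with rfl | hx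
  · simp
  · rw [dslope_tanh_zero_of_ne hx, dslope_tanh_zero_of_ne (neg_ne_zero.2 hx), tanh_neg,
      neg_div_neg_eq]

theorem antitoneOn_dslope_tanh_zero : AntitoneOn (dslope tanh 0) (Ici 0) := by
  intro x hx y hy hxy
  rcases (mem_Ici.1 hx).eq_or_lt with rfl | hx0
  · rcases (mem_Ici.1 hy).eq_or_lt with rfl | hy0
    · rfl
    · rw [dslope_tanh_zero_of_ne hy0.ne', dslope_tanh_zero_zero, div_le_one hy0]
      exact tanh_le_self hy0.le
  · rw [dslope_tanh_zero_of_ne hx0.ne', dslope_tanh_zero_of_ne (hx0.trans_le hxy).ne']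
    exact antitoneOn_tanh_div_self_s6 hx0 (hx0.trans_le hxy) hxy

theorem log_cosh_le_of_nonneg {x y : ℝ} (hx : 0 ≤ x) (hy : 0 ≤ y) :
    log (cosh x) ≤ log (cosh y) + dslope tanh 0 y / 2 * (x ^ 2 - y ^ 2) := by
  set κ := dslope tanh 0 y
  have hderiv (t : ℝ) : HasDerivAt (fun t ↦ log (cosh t) - κ / 2 * t ^ 2)
      (t * (dslope tanh 0 t - κ)) t := by
    refine ((hasDerivAt_log_cosh t).sub ((hasDerivAt_pow 2 t).const_mul (κ / 2))).congr_deriv ?_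
    rw [mul_sub, mul_dslope_tanh_zero]
    ring
  have key := le_of_hasDerivAt_nonneg_of_nonpos hderiv
    (fun t ht ↦ mul_nonneg ht.1.le <| sub_nonneg.2 <|
      antitoneOn_dslope_tanh_zero (mem_Ici.2 ht.1.le) (mem_Ici.2 hy) ht.2.le)
    (fun t (ht : y < t) ↦ mul_nonpos_of_nonneg_of_nonpos (hy.trans ht.le) <| sub_nonpos.2 <|
      antitoneOn_dslope_tanh_zero (mem_Ici.2 hy) (mem_Ici.2 (hy.trans ht.le)) ht.le)
    hx
  linarith

theorem log_cosh_le (x y : ℝ) :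
    log (cosh x) ≤ log (cosh y) + dslope tanh 0 y / 2 * (x ^ 2 - y ^ 2) := by
  have h := log_cosh_le_of_nonneg (abs_nonneg x) (abs_nonneg y)
  rcases abs_cases y with ⟨hy, -⟩ | ⟨hy, -⟩ <;>
    simpa only [cosh_abs, sq_abs, hy, dslope_tanh_zero_neg, cosh_neg, neg_sq] using h

theorem log_mul_exp_add_one_sub {μ s : ℝ} (h : tanh s = 1 - 2 * μ) (lam : ℝ) :
    log (μ * exp lam + 1 - μ) = lam / 2 + log (cosh (lam / 2 - s)) - log (cosh s) := by
  have hμ : μ = (1 - tanh s) / 2 := by linarith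
  have hexp : exp lam = exp (lam / 2) ^ 2 := by rw [← exp_nat_mul]; ring_nf
  have hprod : μ * exp lam + 1 - μ = exp (lam / 2) * cosh (lam / 2 - s) / cosh s := by
    rw [hμ, hexp, tanh_eq, cosh_eq, cosh_eq, exp_neg, exp_neg, exp_sub]
    field_simp
    ring
  rw [hprod, log_div (by positivity) (cosh_pos s).ne', log_mul (exp_pos _).ne' (cosh_pos _).ne',
    log_exp]

theorem log_mul_exp_add_one_sub_sub_le {μ s : ℝ} (h : tanh s = 1 - 2 * μ) (lam : ℝ) :
    log (μ * exp lam + 1 - μ) - μ * lam ≤ dslope tanh 0 s / 8 * lam ^ 2 := by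
  have hκ : s * dslope tanh 0 s = 1 - 2 * μ := (mul_dslope_tanh_zero s).trans h
  have hcosh := log_cosh_le (lam / 2 - s) s
  have hsq : dslope tanh 0 s / 2 * ((lam / 2 - s) ^ 2 - s ^ 2) =
      dslope tanh 0 s / 8 * lam ^ 2 - lam * (s * dslope tanh 0 s) / 2 := by ring
  rw [hsq, hκ] at hcosh
  rw [log_mul_exp_add_one_sub h]
  linarith

theorem log_one_div_sub_one {μ : ℝ} (hμ0 : 0 < μ) (hμ1 : μ < 1) :
    log (1 / μ - 1) = 2 * artanh (1 - 2 * μ) := by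
  rw [artanh_eq_half_log ⟨by linarith, by linarith⟩]
  field_simp
  ring_nf

theorem ite_half_sub_div_log_eq_dslope_tanh {μ : ℝ} (hμ0 : 0 < μ) (hμ1 : μ < 1) :
    (if μ = 1 / 2 then 1 / 4 else (1 / 2 - μ) / log (1 / μ - 1)) =
      dslope tanh 0 (artanh (1 - 2 * μ)) / 4 := by
  have htanh : tanh (artanh (1 - 2 * μ)) = 1 - 2 * μ := tanh_artanh ⟨by linarith, by linarith⟩
  split_ifs with h
  · rw [h, show (1 : ℝ) - 2 * (1 / 2) = 0 by norm_num, artanh_zero, dslope_tanh_zero_zero]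
  · have hs : artanh (1 - 2 * μ) ≠ 0 := fun hs ↦ h (by rw [hs, tanh_zero] at htanh; linarith)
    rw [log_one_div_sub_one hμ0 hμ1, dslope_tanh_zero_of_ne hs, htanh]
    field_simp
    ring

end Real

/-- For every `0 < μ < 1` and every `λ ≠ 0`,
`(2/λ²)(log(μ e^λ + 1 − μ) − μλ) ≤ (1/2 − μ)/log(1/μ − 1)`, where the right-hand side is
interpreted as its limiting value `1/4` when `μ = 1/2`. -/
theorem arbel_strict_bound (μ lam : ℝ) (hμ0 : 0 < μ) (hμ1 : μ < 1) (hlam : lam ≠ 0) :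
    (2 / lam ^ 2) * (Real.log (μ * Real.exp lam + 1 - μ) - μ * lam)
      ≤ if μ = 1 / 2 then 1 / 4 else (1 / 2 - μ) / Real.log (1 / μ - 1) := by
  rw [ite_half_sub_div_log_eq_dslope_tanh hμ0 hμ1]
  have hbound := log_mul_exp_add_one_sub_sub_le
    (tanh_artanh (x := 1 - 2 * μ) ⟨by linarith, by linarith⟩) lam
  calc (2 / lam ^ 2) * (Real.log (μ * Real.exp lam + 1 - μ) - μ * lam)
      ≤ (2 / lam ^ 2) * (dslope tanh 0 (artanh (1 - 2 * μ)) / 8 * lam ^ 2) := by gcongr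
    _ = dslope tanh 0 (artanh (1 - 2 * μ)) / 4 := by field_simp; ring
end

section
/- Let λ₀ ≥ 0 and let A ∈ ℝ^{d×d} be symmetric. Then Ψ_{λ₀}(A, clip) is a minimizer of ‖Â − A‖_F over all symmetric matrices Â ∈ ℝ^{d×d} satisfying xᵀ Â x ≥ λ₀‖x‖² for all x ∈ ℝ^d; that is, for every symmetric Â with Â ⪰ λ₀ I_d one has ‖Ψ_{λ₀}(A, clip) − A‖_F ≤ ‖Â − A‖_F. -/
open Matrix

/-- The Euclidean norm on `ℝ^d`. -/
noncomputable def enorm' {d : ℕ} (x : Fin d → ℝ) : ℝ := Real.sqrt (x ⬝ᵥ x)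

/-- The Frobenius norm `‖M‖_F = √(trace(MᵀM))`. -/
noncomputable def frobNorm' {d : ℕ} (M : Matrix (Fin d) (Fin d) ℝ) : ℝ :=
  Real.sqrt (Matrix.trace (Mᵀ * M))

/-- The eigenvalue clipping operator `Ψ_{λ₀}(A, clip) = Σ_i max{λ₀, λ_i} u_i u_iᵀ`,
given by applying `t ↦ max{λ₀, t}` to `A` via the (continuous) functional calculus. -/
noncomputable def psiClip {d : ℕ} (lam0 : ℝ) (A : Matrix (Fin d) (Fin d) ℝ) :
    Matrix (Fin d) (Fin d) ℝ :=
  cfc (fun t : ℝ => max lam0 t) A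

/-! Conjugating by the orthogonal eigenvector matrix `U` of `A` turns `Ψ − A` into the diagonal
matrix with entries `max{λ₀, λᵢ} − λᵢ` and preserves the Frobenius norm. In the same frame the
`i`-th diagonal entry of `B − A` is `uᵢᵀ B uᵢ − λᵢ ≥ λ₀ − λᵢ`, so it is at least as far from `0`
as `max{λ₀, λᵢ} − λᵢ`; the off-diagonal entries only add to `‖B − A‖_F`. -/

theorem sq_max_sub_le_sq_sub_of_le {α : Type*} [Ring α] [LinearOrder α] [IsOrderedRing α]
    {c b t : α} (hcb : c ≤ b) :
    (max c t - t) ^ 2 ≤ (b - t) ^ 2 := by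
  rcases le_total c t with hct | htc
  · simp [max_eq_right hct, sq_nonneg]
  · rw [max_eq_left htc]
    exact pow_le_pow_left₀ (sub_nonneg.mpr htc) (sub_le_sub_right hcb t) 2

namespace Matrix

variable {n R : Type*} [Fintype n]

theorem trace_transpose_mul_self_orthogonal_conj [CommRing R] [DecidableEq n] {U : Matrix n n R}
    (hU : U * Uᵀ = 1) (M : Matrix n n R) :
    trace ((Uᵀ * M * U)ᵀ * (Uᵀ * M * U)) = trace (Mᵀ * M) := by
  have hconj : (Uᵀ * M * U)ᵀ * (Uᵀ * M * U) = Uᵀ * (Mᵀ * M) * U := by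
    simp only [transpose_mul, transpose_transpose, Matrix.mul_assoc]
    rw [← Matrix.mul_assoc U, hU, Matrix.one_mul]
  rw [hconj, trace_mul_cycle, ← Matrix.mul_assoc, hU, Matrix.one_mul]

theorem le_transpose_mul_mul_apply_self [CommRing R] [PartialOrder R] [DecidableEq n] {c : R}
    {B U : Matrix n n R} (hB : ∀ x, c * (x ⬝ᵥ x) ≤ x ⬝ᵥ B *ᵥ x) (hU : Uᵀ * U = 1) (i : n) :
    c ≤ (Uᵀ * B * U) i i := by
  have hunit : Uᵀ i ⬝ᵥ Uᵀ i = 1 := by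
    simpa [mul_apply, dotProduct] using congrFun (congrFun hU i) i
  simpa [mul_mul_apply, hunit] using hB (Uᵀ i)

theorem sum_sq_diag_le_trace_transpose_mul_self [CommRing R] [LinearOrder R]
    [IsStrictOrderedRing R] (M : Matrix n n R) :
    ∑ i, M i i ^ 2 ≤ trace (Mᵀ * M) := by
  simp only [trace, diag, mul_apply, transpose_apply, ← sq]
  exact Finset.sum_le_sum fun i _ =>
    Finset.single_le_sum (f := fun j => M j i ^ 2) (fun j _ => sq_nonneg _) (Finset.mem_univ i)

theorem IsHermitian.star_eigenvectorUnitary_mul_cfc_mul_eigenvectorUnitary {𝕜 : Type*} [RCLike 𝕜]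
    [DecidableEq n] {A : Matrix n n 𝕜} (hA : A.IsHermitian) (f : ℝ → ℝ) :
    star (hA.eigenvectorUnitary : Matrix n n 𝕜) * cfc f A *
      (hA.eigenvectorUnitary : Matrix n n 𝕜) = diagonal (RCLike.ofReal ∘ f ∘ hA.eigenvalues) := by
  rw [hA.cfc_eq, IsHermitian.cfc, Unitary.conjStarAlgAut_apply]
  simp only [Matrix.mul_assoc, Unitary.coe_star_mul_self, Matrix.mul_one]
  rw [← Matrix.mul_assoc, Unitary.coe_star_mul_self, Matrix.one_mul]

theorem IsHermitian.transpose_eigenvectorUnitary_mul_cfc_mul_eigenvectorUnitary [DecidableEq n]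
    {A : Matrix n n ℝ} (hA : A.IsHermitian) (f : ℝ → ℝ) :
    (hA.eigenvectorUnitary : Matrix n n ℝ)ᵀ * cfc f A * (hA.eigenvectorUnitary : Matrix n n ℝ) =
      diagonal (f ∘ hA.eigenvalues) := by
  rw [← conjTranspose_eq_transpose_of_trivial, ← star_eq_conjTranspose,
    hA.star_eigenvectorUnitary_mul_cfc_mul_eigenvectorUnitary, RCLike.ofReal_real_eq_id,
    Function.id_comp]

end Matrix

theorem enorm'_sq {d : ℕ} (x : Fin d → ℝ) : enorm' x ^ 2 = x ⬝ᵥ x :=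
  Real.sq_sqrt (by simpa using dotProduct_star_self_nonneg x)

theorem frobNorm'_transpose_mul_mul {d : ℕ} {U : Matrix (Fin d) (Fin d) ℝ} (hU : U * Uᵀ = 1)
    (M : Matrix (Fin d) (Fin d) ℝ) : frobNorm' (Uᵀ * M * U) = frobNorm' M := by
  rw [frobNorm', frobNorm', trace_transpose_mul_self_orthogonal_conj hU]

theorem frobNorm'_diagonal {d : ℕ} (v : Fin d → ℝ) :
    frobNorm' (diagonal v) = Real.sqrt (∑ i, v i ^ 2) := by
  simp [frobNorm', sq]

theorem sqrt_sum_sq_diag_le_frobNorm' {d : ℕ} (M : Matrix (Fin d) (Fin d) ℝ) :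
    Real.sqrt (∑ i, M i i ^ 2) ≤ frobNorm' M :=
  Real.sqrt_le_sqrt (sum_sq_diag_le_trace_transpose_mul_self M)

theorem psiClip_is_frobenius_projection_general {d : ℕ} (lam0 : ℝ)
    (A : Matrix (Fin d) (Fin d) ℝ) (hAsym : Aᵀ = A) :
    ∀ B : Matrix (Fin d) (Fin d) ℝ, Bᵀ = B →
      (∀ x : Fin d → ℝ, lam0 * enorm' x ^ 2 ≤ x ⬝ᵥ B.mulVec x) →
      frobNorm' (psiClip lam0 A - A) ≤ frobNorm' (B - A) := by
  intro B _ hB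
  have hA : A.IsHermitian := by rwa [IsHermitian, conjTranspose_eq_transpose_of_trivial]
  set U : Matrix (Fin d) (Fin d) ℝ := ↑hA.eigenvectorUnitary
  set μ := hA.eigenvalues
  have hstar : star U = Uᵀ := conjTranspose_eq_transpose_of_trivial U
  have hUUt : U * Uᵀ = 1 := hstar ▸ Unitary.coe_mul_star_self hA.eigenvectorUnitary
  have hUtU : Uᵀ * U = 1 := hstar ▸ Unitary.coe_star_mul_self hA.eigenvectorUnitary
  have hconj := hA.transpose_eigenvectorUnitary_mul_cfc_mul_eigenvectorUnitary
  have hA_diag : Uᵀ * A * U = diagonal μ := by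
    simpa [cfc_id ℝ A hA.isSelfAdjoint] using hconj id
  have hΨ : Uᵀ * (psiClip lam0 A - A) * U = diagonal fun i => max lam0 (μ i) - μ i := by
    rw [Matrix.mul_sub, Matrix.sub_mul, hA_diag, psiClip, hconj, diagonal_sub]; rfl
  have hBA (i : Fin d) : (Uᵀ * (B - A) * U) i i = (Uᵀ * B * U) i i - μ i := by
    simp [Matrix.mul_sub, Matrix.sub_mul, hA_diag]
  have hB' : ∀ x, lam0 * (x ⬝ᵥ x) ≤ x ⬝ᵥ B *ᵥ x := fun x => enorm'_sq x ▸ hB x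
  calc frobNorm' (psiClip lam0 A - A)
      = Real.sqrt (∑ i, (max lam0 (μ i) - μ i) ^ 2) := by
        rw [← frobNorm'_transpose_mul_mul hUUt, hΨ, frobNorm'_diagonal]
    _ ≤ Real.sqrt (∑ i, (Uᵀ * (B - A) * U) i i ^ 2) := by
        refine Real.sqrt_le_sqrt (Finset.sum_le_sum fun i _ => ?_)
        rw [hBA]
        exact sq_max_sub_le_sq_sub_of_le (le_transpose_mul_mul_apply_self hB' hUtU i)
    _ ≤ frobNorm' (Uᵀ * (B - A) * U) := sqrt_sum_sq_diag_le_frobNorm' _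
    _ = frobNorm' (B - A) := frobNorm'_transpose_mul_mul hUUt _

/-- For `λ₀ ≥ 0` and symmetric `A`, `Ψ_{λ₀}(A, clip)` minimizes `‖Â − A‖_F` over all
symmetric `Â` with `Â ⪰ λ₀ I_d`: for every such `Â`,
`‖Ψ_{λ₀}(A, clip) − A‖_F ≤ ‖Â − A‖_F`. -/
theorem psiClip_is_frobenius_projection {d : ℕ} (lam0 : ℝ) (hlam0 : 0 ≤ lam0)
    (A : Matrix (Fin d) (Fin d) ℝ) (hAsym : Aᵀ = A) :
    ∀ B : Matrix (Fin d) (Fin d) ℝ, Bᵀ = B →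
      (∀ x : Fin d → ℝ, lam0 * enorm' x ^ 2 ≤ x ⬝ᵥ B.mulVec x) →
      frobNorm' (psiClip lam0 A - A) ≤ frobNorm' (B - A) :=
  psiClip_is_frobenius_projection_general lam0 A hAsym
end

section
/- Let λ₀ > 0 and n ∈ ℕ with 4nλ₀ > 1. Let H, E ∈ ℝ^{d×d} be symmetric positive semi-definite matrices with ‖E‖_F ≤ 1/4. Set A = Ψ_{λ₀}(H, clip) and B = Ψ_{λ₀}(H + (1/n)E, clip). Then A and B are invertible and ‖A⁻¹ − B⁻¹‖ ≤ 1/(4nλ₀² − λ₀), where ‖·‖ denotes the operator norm. -/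
open Matrix

/-- The `ℓ₂ → ℓ₂` operator norm of a matrix: `‖M‖ = sup_{‖x‖ ≤ 1} ‖Mx‖`. -/
noncomputable def opNorm' {d : ℕ} (M : Matrix (Fin d) (Fin d) ℝ) : ℝ :=
  sSup {r : ℝ | ∃ x : Fin d → ℝ, enorm' x ≤ 1 ∧ r = enorm' (M.mulVec x)}

/-!
Write `A = Ψ(H)`, `B = Ψ(H + E/n)`. Then `A⁻¹ - B⁻¹ = A⁻¹ (B - A) B⁻¹`, and both inverses have
operator norm at most `λ₀⁻¹` since the clipped spectra lie in `[λ₀, ∞)`. The operator norm of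
`B - A` is at most its Frobenius norm, and clipping, like any 1-Lipschitz function of a symmetric
matrix, does not increase Frobenius distances: if `X = U diag(λ) Uᵀ` and `Y = V diag(μ) Vᵀ`, then
`Uᵀ (f(X) - f(Y)) V` has entries `(UᵀV)ᵢⱼ (f λᵢ - f μⱼ)`, and multiplying by orthogonal matrices
preserves the Frobenius norm. Hence `‖A⁻¹ - B⁻¹‖ ≤ ‖E/n‖_F / λ₀² ≤ 1/(4nλ₀²)`.
-/

section Frobenius

variable {d : ℕ}

lemma frobNorm'_eq_sqrt_sum_sq (M : Matrix (Fin d) (Fin d) ℝ) :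
    frobNorm' M = √(∑ i, ∑ j, M i j ^ 2) := by
  rw [frobNorm', trace, Finset.sum_comm]
  simp [mul_apply, sq]

lemma frobNorm'_nonneg (M : Matrix (Fin d) (Fin d) ℝ) : 0 ≤ frobNorm' M := Real.sqrt_nonneg _

lemma frobNorm'_le_of_abs_le {M N : Matrix (Fin d) (Fin d) ℝ} (h : ∀ i j, |M i j| ≤ |N i j|) :
    frobNorm' M ≤ frobNorm' N := by
  simp only [frobNorm'_eq_sqrt_sum_sq, ← sq_abs (M _ _), ← sq_abs (N _ _)]
  exact Real.sqrt_le_sqrt <| Finset.sum_le_sum fun i _ => Finset.sum_le_sum fun j _ =>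
    pow_le_pow_left₀ (abs_nonneg _) (h i j) 2

lemma frobNorm'_smul (c : ℝ) (M : Matrix (Fin d) (Fin d) ℝ) :
    frobNorm' (c • M) = |c| * frobNorm' M := by
  simp only [frobNorm'_eq_sqrt_sum_sq, Matrix.smul_apply, smul_eq_mul, mul_pow, ← Finset.mul_sum]
  rw [Real.sqrt_mul (sq_nonneg c), Real.sqrt_sq_eq_abs]

lemma frobNorm'_unitary_mul {U : Matrix (Fin d) (Fin d) ℝ} (hU : U ∈ unitaryGroup (Fin d) ℝ)
    (M : Matrix (Fin d) (Fin d) ℝ) : frobNorm' (U * M) = frobNorm' M := by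
  have hUU : Uᵀ * U = 1 := Unitary.star_mul_self_of_mem hU
  rw [frobNorm', frobNorm', transpose_mul, Matrix.mul_assoc, ← Matrix.mul_assoc Uᵀ, hUU,
    Matrix.one_mul]

lemma frobNorm'_mul_unitary (M : Matrix (Fin d) (Fin d) ℝ) {U : Matrix (Fin d) (Fin d) ℝ}
    (hU : U ∈ unitaryGroup (Fin d) ℝ) : frobNorm' (M * U) = frobNorm' M := by
  have hUU : U * Uᵀ = 1 := Unitary.mul_star_self_of_mem hU
  rw [frobNorm', frobNorm', transpose_mul, Matrix.mul_assoc, trace_mul_comm, Matrix.mul_assoc,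
    Matrix.mul_assoc, hUU, Matrix.mul_one]

attribute [local instance] Matrix.frobeniusNormedAddCommGroup in
lemma norm_mulVec_le_frobNorm' (M : Matrix (Fin d) (Fin d) ℝ) (x : EuclideanSpace ℝ (Fin d)) :
    ‖WithLp.toLp 2 (M *ᵥ x)‖ ≤ frobNorm' M * ‖x‖ := by
  have hM : frobNorm' M = ‖M‖ := by
    rw [frobNorm'_eq_sqrt_sum_sq, frobenius_norm_def, Real.sqrt_eq_rpow]
    simp [Real.norm_eq_abs]
  rw [hM, ← frobenius_norm_replicateCol (ι := Unit), ← frobenius_norm_replicateCol (ι := Unit),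
    replicateCol_mulVec]
  exact frobenius_norm_mul _ _

end Frobenius

namespace Matrix

variable {ι : Type*} [Fintype ι] [DecidableEq ι]

lemma IsHermitian.cfc_eq_conj_diagonal {A : Matrix ι ι ℝ} (hA : A.IsHermitian) (f : ℝ → ℝ) :
    cfc f A = (hA.eigenvectorUnitary : Matrix ι ι ℝ) * diagonal (f ∘ hA.eigenvalues) *
      star (hA.eigenvectorUnitary : Matrix ι ι ℝ) := by
  rw [hA.cfc_eq, IsHermitian.cfc, Unitary.conjStarAlgAut_apply]
  rfl

lemma star_mul_conj_diagonal_sub_conj_diagonal_mul {U V : Matrix ι ι ℝ}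
    (hU : U ∈ unitaryGroup ι ℝ) (hV : V ∈ unitaryGroup ι ℝ) (p q : ι → ℝ) :
    star U * (U * diagonal p * star U - V * diagonal q * star V) * V =
      of fun i j => (star U * V) i j * (p i - q j) := by
  have hUU : star U * U = 1 := Unitary.star_mul_self_of_mem hU
  have hVV : star V * V = 1 := Unitary.star_mul_self_of_mem hV
  have : star U * (U * diagonal p * star U - V * diagonal q * star V) * V =
      diagonal p * (star U * V) - (star U * V) * diagonal q := by
    simp only [Matrix.mul_sub, Matrix.sub_mul, ← Matrix.mul_assoc, hUU, Matrix.one_mul]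
    simp only [Matrix.mul_assoc, hVV, Matrix.mul_one]
  ext i j
  rw [this, sub_apply, diagonal_mul, mul_diagonal, of_apply]
  ring

end Matrix

lemma frobNorm'_cfc_sub_cfc_le {d : ℕ} {f : ℝ → ℝ} (hf : LipschitzWith 1 f)
    {A B : Matrix (Fin d) (Fin d) ℝ} (hA : A.IsHermitian) (hB : B.IsHermitian) :
    frobNorm' (cfc f A - cfc f B) ≤ frobNorm' (A - B) := by
  set U : Matrix (Fin d) (Fin d) ℝ := ↑hA.eigenvectorUnitary
  set V : Matrix (Fin d) (Fin d) ℝ := ↑hB.eigenvectorUnitary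
  have hU : U ∈ unitaryGroup (Fin d) ℝ := hA.eigenvectorUnitary.prop
  have hV : V ∈ unitaryGroup (Fin d) ℝ := hB.eigenvectorUnitary.prop
  have hconj : ∀ g : ℝ → ℝ, frobNorm' (cfc g A - cfc g B) = frobNorm' (of fun i j =>
      (star U * V) i j * (g (hA.eigenvalues i) - g (hB.eigenvalues j))) := by
    intro g
    rw [← star_mul_conj_diagonal_sub_conj_diagonal_mul hU hV, frobNorm'_mul_unitary _ hV,
      frobNorm'_unitary_mul (Unitary.star_mem hU), hA.cfc_eq_conj_diagonal,
      hB.cfc_eq_conj_diagonal]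
    rfl
  calc frobNorm' (cfc f A - cfc f B)
      = frobNorm' (of fun i j => (star U * V) i j *
          (f (hA.eigenvalues i) - f (hB.eigenvalues j))) := hconj f
    _ ≤ frobNorm' (of fun i j => (star U * V) i j *
          (id (hA.eigenvalues i) - id (hB.eigenvalues j))) := by
      refine frobNorm'_le_of_abs_le fun i j => ?_
      simp only [of_apply, abs_mul, id]
      refine mul_le_mul_of_nonneg_left ?_ (abs_nonneg _)
      simpa [Real.dist_eq] using hf.dist_le_mul (hA.eigenvalues i) (hB.eigenvalues j)
    _ = frobNorm' (A - B) := by rw [← hconj, cfc_id ℝ A, cfc_id ℝ B]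

section Clip

variable {d : ℕ} {lam0 : ℝ}

lemma isUnit_psiClip (hlam0 : 0 < lam0) {X : Matrix (Fin d) (Fin d) ℝ} (hX : X.IsHermitian) :
    IsUnit (psiClip lam0 X) :=
  (isUnit_cfc_iff _ X).2 fun _ _ => (hlam0.trans_le (le_max_left _ _)).ne'

lemma psiClip_inv (hlam0 : 0 < lam0) {X : Matrix (Fin d) (Fin d) ℝ} (hX : X.IsHermitian) :
    (psiClip lam0 X)⁻¹ = cfc (fun t => (max lam0 t)⁻¹) X := by
  rw [nonsing_inv_eq_ringInverse, psiClip,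
    cfc_inv _ _ fun _ _ => (hlam0.trans_le (le_max_left _ _)).ne']

end Clip

section L2

open scoped Matrix.Norms.L2Operator

variable {d : ℕ} {lam0 : ℝ}

lemma enorm'_eq_norm (x : Fin d → ℝ) : enorm' x = ‖WithLp.toLp 2 x‖ := by
  simp [enorm', EuclideanSpace.norm_eq, dotProduct, sq]

lemma opNorm'_le_l2_opNorm (M : Matrix (Fin d) (Fin d) ℝ) : opNorm' M ≤ ‖M‖ := by
  refine Real.sSup_le ?_ (norm_nonneg M)
  rintro _ ⟨x, hx, rfl⟩
  rw [enorm'_eq_norm] at hx ⊢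
  calc ‖WithLp.toLp 2 (M *ᵥ x)‖ ≤ ‖M‖ * ‖WithLp.toLp 2 x‖ := M.l2_opNorm_mulVec _
    _ ≤ ‖M‖ := mul_le_of_le_one_right (norm_nonneg M) hx

lemma l2_opNorm_le_frobNorm' (M : Matrix (Fin d) (Fin d) ℝ) : ‖M‖ ≤ frobNorm' M :=
  ContinuousLinearMap.opNorm_le_bound _ (frobNorm'_nonneg M) (norm_mulVec_le_frobNorm' M)

lemma l2_opNorm_psiClip_inv_le (hlam0 : 0 < lam0) {X : Matrix (Fin d) (Fin d) ℝ}
    (hX : X.IsHermitian) : ‖(psiClip lam0 X)⁻¹‖ ≤ lam0⁻¹ := by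
  rw [psiClip_inv hlam0 hX]
  refine norm_cfc_le (by positivity) fun t _ => ?_
  rw [Real.norm_of_nonneg (by positivity)]
  exact inv_anti₀ hlam0 (le_max_left _ _)

lemma opNorm'_psiClip_inv_sub_psiClip_inv_le (hlam0 : 0 < lam0) {X Y : Matrix (Fin d) (Fin d) ℝ}
    (hX : X.IsHermitian) (hY : Y.IsHermitian) :
    opNorm' ((psiClip lam0 X)⁻¹ - (psiClip lam0 Y)⁻¹) ≤ frobNorm' (Y - X) / lam0 ^ 2 := by
  set A := psiClip lam0 X
  set B := psiClip lam0 Y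
  calc opNorm' (A⁻¹ - B⁻¹) ≤ ‖A⁻¹ * (B - A) * B⁻¹‖ := by
        rw [← inv_sub_inv (iff_of_true (isUnit_psiClip hlam0 hX) (isUnit_psiClip hlam0 hY))]
        exact opNorm'_le_l2_opNorm _
    _ ≤ ‖A⁻¹‖ * frobNorm' (B - A) * ‖B⁻¹‖ := by
        grw [norm_mul_le, norm_mul_le, l2_opNorm_le_frobNorm' (B - A)]
    _ ≤ lam0⁻¹ * frobNorm' (Y - X) * lam0⁻¹ := by
        have hBA : frobNorm' (B - A) ≤ frobNorm' (Y - X) :=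
          frobNorm'_cfc_sub_cfc_le (LipschitzWith.id.const_max lam0) hY hX
        exact mul_le_mul (mul_le_mul (l2_opNorm_psiClip_inv_le hlam0 hX) hBA (frobNorm'_nonneg _)
          (by positivity)) (l2_opNorm_psiClip_inv_le hlam0 hY) (norm_nonneg _)
          (mul_nonneg (by positivity) (frobNorm'_nonneg _))
    _ = frobNorm' (Y - X) / lam0 ^ 2 := by field_simp

end L2

/-- Let `λ₀ > 0` and `n ∈ ℕ` with `4nλ₀ > 1`. Let `H, E` be symmetric PSD with
`‖E‖_F ≤ 1/4`, and set `A = Ψ_{λ₀}(H, clip)`, `B = Ψ_{λ₀}(H + (1/n)E, clip)`.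
Then `A, B` are invertible and `‖A⁻¹ − B⁻¹‖ ≤ 1/(4nλ₀² − λ₀)` in the operator norm. -/
theorem psiClip_inverse_sensitivity {d : ℕ} (lam0 : ℝ) (hlam0 : 0 < lam0)
    (n : ℕ) (hn : 1 < 4 * (n : ℝ) * lam0)
    (H E : Matrix (Fin d) (Fin d) ℝ) (hH : H.PosSemidef) (hE : E.PosSemidef)
    (hEF : frobNorm' E ≤ 1 / 4) :
    IsUnit (psiClip lam0 H) ∧ IsUnit (psiClip lam0 (H + ((1 : ℝ) / n) • E)) ∧
      opNorm' ((psiClip lam0 H)⁻¹ - (psiClip lam0 (H + ((1 : ℝ) / n) • E))⁻¹)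
        ≤ 1 / (4 * n * lam0 ^ 2 - lam0) := by
  have hn0 : (0 : ℝ) < n := by
    rcases n.eq_zero_or_pos with rfl | hpos
    · norm_num at hn
    · exact_mod_cast hpos
  have hH' : (H + ((1 : ℝ) / n) • E).IsHermitian := (hH.add (hE.smul (by positivity))).1
  refine ⟨isUnit_psiClip hlam0 hH.1, isUnit_psiClip hlam0 hH', ?_⟩
  calc _ ≤ frobNorm' (H + ((1 : ℝ) / n) • E - H) / lam0 ^ 2 :=
        opNorm'_psiClip_inv_sub_psiClip_inv_le hlam0 hH.1 hH'
    _ = 1 / n * frobNorm' E / lam0 ^ 2 := by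
        rw [add_sub_cancel_left, frobNorm'_smul, abs_of_nonneg (by positivity)]
    _ ≤ 1 / n * (1 / 4) / lam0 ^ 2 := by gcongr
    _ = 1 / (4 * n * lam0 ^ 2) := by field_simp
    _ ≤ 1 / (4 * n * lam0 ^ 2 - lam0) := one_div_le_one_div_of_le (by nlinarith) (by linarith)
end
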